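/- Let f : A → A be a function such that f² = f ∘ f has no proper cycle and f has at most one fixed point. Then there exists a distributive lattice structure (A, ⊔, ⊓) on A such that f is a lattice anti-endomorphism of (A, ⊔, ⊓). -/

import Mathlib

/-- `f` has a cycle of length `n`: `n` distinct elements `x₀,…,x_{n-1}` with
`f(xᵢ) = x_{i+1}` (indices mod `n`). -/
def HasCycle {A : Type*} (f : A → A) (n : ℕ) : Prop :=
  ∃ x : Fin n → A, Function.Injective x ∧
    ∀ i : Fin n, f (x i) = x ⟨((i : ℕ) + 1) % n, Nat.mod_lt _ i.pos⟩

/-- `f` is a lattice anti-endomorphism. -/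
def IsLatAntiEndo {A : Type*} [Lattice A] (f : A → A) : Prop :=
  ∀ x y : A, f (x ⊔ y) = f x ⊓ f y ∧ f (x ⊓ y) = f x ⊔ f y

/-!
The periodic points of `f` have period at most 2, since a point of minimal period `p ≥ 3`
would lie on a proper cycle of `f ∘ f`. So every component of the functional graph of `f`
(points whose forward orbits meet) is acyclic, or contains a single 2-cycle, or contains the
fixed point. We build a linear order on `A` in which `f` is antitone; a chain is a distributive
lattice, and antitone self-maps of a chain are anti-endomorphisms.

Every point gets a side, the parity of its distance to a base point of its component (to the
fixed point on its component), so that `f` swaps the two sides except at the fixed point, which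
lies on side `false`. Points are then compared by a key: their component, with the component of
the fixed point on top; their level, which `f` raises by one (height in an acyclic component,
minus the distance to the cycle otherwise); and, between points whose orbits merge, the
colexicographic order of their orbits. On each side this key is total and weakly preserved by
`f`, and the fixed point is its maximum. Putting side `false`, ordered by the key, below side
`true`, ordered by the reversed key, makes `f` antitone.
-/

open Function OrderDual

section Cycles

variable {A : Type*}

theorem hasCycle_minimalPeriod (g : A → A) (x : A) :
    HasCycle g (minimalPeriod g x) := by
  refine ⟨fun i => g^[i] x,
    fun i j hij => Fin.ext (iterate_injOn_Iio_minimalPeriod i.isLt j.isLt hij), fun i => ?_⟩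
  show g (g^[i] x) = g^[(i + 1) % minimalPeriod g x] x
  rw [iterate_mod_minimalPeriod_eq, iterate_succ_apply']

theorem isPeriodicPt_two_of_forall_not_hasCycle {f : A → A}
    (hcyc : ∀ n, 2 ≤ n → ¬HasCycle (f ∘ f) n) {x : A} (hx : x ∈ periodicPts f) :
    IsPeriodicPt f 2 x := by
  obtain ⟨n, hn, hxn⟩ := mem_periodicPts.1 hx
  have hx₂ : x ∈ periodicPts (f ∘ f) := mk_mem_periodicPts hn (hxn.iterate 2)
  have hpos := minimalPeriod_pos_of_mem_periodicPts hx₂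
  have hle : minimalPeriod (f ∘ f) x ≤ 1 := by
    by_contra! h
    exact hcyc _ h (hasCycle_minimalPeriod _ _)
  exact (minimalPeriod_eq_one_iff_isFixedPt (f := f ∘ f)).1 (by omega)

end Cycles

section SideOrder

variable {A P : Type*} {f : A → A} {s : A → Bool} {g : A → P} {x y : A}

def sideKey (s : A → Bool) (g : A → P) (x : A) : Lex (P ⊕ Pᵒᵈ) :=
  bif s x then toLex (.inr (toDual (g x))) else toLex (.inl (g x))

theorem sideKey_of_false (h : s x = false) : sideKey s g x = toLex (.inl (g x)) := by
  simp [sideKey, h]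

theorem sideKey_of_true (h : s x = true) : sideKey s g x = toLex (.inr (toDual (g x))) := by
  simp [sideKey, h]

theorem sideKey_injective (hg : Injective g) : Injective (sideKey s g) := by
  intro x y h
  cases hx : s x <;> cases hy : s y <;>
    simp [sideKey_of_false, sideKey_of_true, hx, hy] at h <;> exact hg h

variable [PartialOrder P]

theorem sideKey_le_total (htotal : ∀ x y, s x = s y → g x ≤ g y ∨ g y ≤ g x) (x y : A) :
    sideKey s g x ≤ sideKey s g y ∨ sideKey s g y ≤ sideKey s g x := by
  cases hx : s x <;> cases hy : s y <;> simp [sideKey, hx, hy, Or.comm (a := g y ≤ g x)] <;>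
    exact htotal x y (hx.trans hy.symm)

theorem sideKey_apply_le (hg : Injective g) (hside : ∀ x, ¬IsFixedPt f x → s (f x) = !s x)
    (hfixed : ∀ u, IsFixedPt f u → s u = false ∧ ∀ y, s y = false → g y ≤ g u)
    (hmono : ∀ x y, ¬IsFixedPt f x → ¬IsFixedPt f y → s x = s y → g x ≤ g y →
      g (f x) ≤ g (f y))
    (h : sideKey s g x ≤ sideKey s g y) : sideKey s g (f y) ≤ sideKey s g (f x) := by
  have hmoved : ∀ z, s z = true → ¬IsFixedPt f z := fun z hz hfz => by
    simp [(hfixed z hfz).1] at hz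
  cases hx : s x <;> cases hy : s y
  · rw [sideKey_of_false hx, sideKey_of_false hy, Sum.Lex.inl_le_inl_iff] at h
    by_cases hxf : IsFixedPt f x
    · rw [hg (le_antisymm h ((hfixed x hxf).2 y hy))]
    have hfx : s (f x) = true := by simpa [hx] using hside x hxf
    rw [sideKey_of_true hfx]
    by_cases hyf : IsFixedPt f y
    · rw [hyf, sideKey_of_false hy]
      exact Sum.Lex.inl_le_inr _ _
    · rw [sideKey_of_true (by simpa [hy] using hside y hyf), Sum.Lex.inr_le_inr_iff,
        toDual_le_toDual]
      exact hmono x y hxf hyf (hx.trans hy.symm) h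
  · have hfy : s (f y) = false := by simpa [hy] using hside y (hmoved y hy)
    rw [sideKey_of_false hfy]
    by_cases hxf : IsFixedPt f x
    · rw [hxf, sideKey_of_false hx, Sum.Lex.inl_le_inl_iff]
      exact (hfixed x hxf).2 _ hfy
    · rw [sideKey_of_true (by simpa [hx] using hside x hxf)]
      exact Sum.Lex.inl_le_inr _ _
  · rw [sideKey_of_true hx, sideKey_of_false hy] at h
    exact absurd h Sum.Lex.not_inr_le_inl
  · rw [sideKey_of_true hx, sideKey_of_true hy, Sum.Lex.inr_le_inr_iff, toDual_le_toDual] at h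
    rw [sideKey_of_false (by simpa [hy] using hside y (hmoved y hy)),
      sideKey_of_false (by simpa [hx] using hside x (hmoved x hx)), Sum.Lex.inl_le_inl_iff]
    exact hmono y x (hmoved y hy) (hmoved x hx) (hy.trans hx.symm) h

theorem exists_linearOrder_antitone_of_side (hg : Injective g)
    (htotal : ∀ x y, s x = s y → g x ≤ g y ∨ g y ≤ g x)
    (hside : ∀ x, ¬IsFixedPt f x → s (f x) = !s x)
    (hfixed : ∀ u, IsFixedPt f u → s u = false ∧ ∀ y, s y = false → g y ≤ g u)
    (hmono : ∀ x y, ¬IsFixedPt f x → ¬IsFixedPt f y → s x = s y → g x ≤ g y →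
      g (f x) ≤ g (f y)) :
    ∃ _ : LinearOrder A, Antitone f := by
  let _ : PartialOrder A := PartialOrder.lift (sideKey s g) (sideKey_injective hg)
  let order : LinearOrder A :=
    { le_total := sideKey_le_total htotal, toDecidableLE := Classical.decRel _ }
  exact ⟨order, fun x y h => sideKey_apply_le hg hside hfixed hmono h⟩

end SideOrder

section Colex

variable {L : Type*} [LinearOrder L] {a b : ℕ → L}

theorem toColex_tail_le_tail (h : toColex a ≤ toColex b) :
    toColex (fun n => a (n + 1)) ≤ toColex (fun n => b (n + 1)) := by
  rcases h.lt_or_eq with ⟨i, hi, hlt⟩ | h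
  · cases i with
    | zero => exact (congrArg toColex (funext fun n => hi (n + 1) n.succ_pos)).le
    | succ i =>
      exact le_of_lt (show toColex (fun n => a (n + 1)) < toColex (fun n => b (n + 1)) from
        Exists.intro i ⟨fun j hj => hi (j + 1) (by omega), hlt⟩)
  · rw [toColex_inj.1 h]

theorem toColex_le_total_of_eventually_eq {N : ℕ} (h : ∀ n, N ≤ n → a n = b n) :
    toColex a ≤ toColex b ∨ toColex b ≤ toColex a := by
  classical
  by_cases hab : a = b
  · exact Or.inl (hab ▸ le_rfl)
  obtain ⟨k, hk⟩ := Function.ne_iff.1 hab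
  have hkN : k ≤ N := by
    by_contra
    exact hk (h k (by omega))
  set i := Nat.findGreatest (fun i => a i ≠ b i) N
  have hi : a i ≠ b i := Nat.findGreatest_spec (P := fun i => a i ≠ b i) hkN hk
  have habove : ∀ j, i < j → a j = b j := fun j hj => by
    by_cases hjN : j ≤ N
    · exact not_not.1 (Nat.findGreatest_is_greatest hj hjN)
    · exact h j (by omega)
  rcases hi.lt_or_gt with hlt | hgt
  · exact Or.inl (le_of_lt (show toColex a < toColex b from Exists.intro i ⟨habove, hlt⟩))
  · exact Or.inr (le_of_lt (show toColex b < toColex a from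
      Exists.intro i ⟨fun j hj => (habove j hj).symm, hgt⟩))

end Colex

section Dynamics

variable {A : Type*} {f : A → A} {x y z w u : A} {a b m n k : ℕ}

theorem iterate_mem_periodicPts (hx : x ∈ periodicPts f) (n : ℕ) :
    f^[n] x ∈ periodicPts f := by
  obtain ⟨p, hp, hxp⟩ := mem_periodicPts.1 hx
  exact mk_mem_periodicPts hp (hxp.apply_iterate n)

theorem apply_mem_periodicPts (hx : x ∈ periodicPts f) : f x ∈ periodicPts f :=
  iterate_mem_periodicPts hx 1

theorem Function.IsPeriodicPt.iterate_eq_or_eq_apply (hz : IsPeriodicPt f 2 z) (m : ℕ) :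
    f^[m] z = z ∨ f^[m] z = f z := by
  rw [← hz.iterate_mod_apply m]
  rcases Nat.mod_two_eq_zero_or_one m with h | h <;> rw [h]
  · exact Or.inl rfl
  · exact Or.inr rfl

theorem isPeriodicPt_iterate_of_iterate_eq (h : f^[a] x = f^[b] x) (hab : a ≤ b) :
    IsPeriodicPt f (b - a) (f^[a] x) := by
  rw [IsPeriodicPt, IsFixedPt, ← iterate_add_apply, Nat.sub_add_cancel hab, h]

theorem iterate_add_eq_of_eq (h₁ : f^[m] x = f^[n] z) (h₂ : f^[a] y = f^[b] z) :
    f^[b + m] x = f^[n + a] y := by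
  rw [iterate_add_apply, h₁, ← iterate_add_apply, add_comm, iterate_add_apply, ← h₂,
    ← iterate_add_apply]

def OrbitsMeet (f : A → A) (x y : A) : Prop := ∃ m n, f^[m] x = f^[n] y

namespace OrbitsMeet

theorem refl (x : A) : OrbitsMeet f x x := ⟨0, 0, rfl⟩

theorem symm : OrbitsMeet f x y → OrbitsMeet f y x := fun ⟨m, n, h⟩ => ⟨n, m, h.symm⟩

theorem trans : OrbitsMeet f x y → OrbitsMeet f y z → OrbitsMeet f x z :=
  fun ⟨m, n, h₁⟩ ⟨a, b, h₂⟩ => ⟨a + m, n + b, iterate_add_eq_of_eq h₁ h₂.symm⟩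

theorem iterate_left (x : A) (n : ℕ) : OrbitsMeet f (f^[n] x) x := ⟨0, n, rfl⟩

theorem apply_left (x : A) : OrbitsMeet f (f x) x := iterate_left x 1

end OrbitsMeet

def orbitsMeetSetoid (f : A → A) : Setoid A :=
  ⟨OrbitsMeet f, ⟨OrbitsMeet.refl, OrbitsMeet.symm, OrbitsMeet.trans⟩⟩

def EventuallyPeriodic (f : A → A) (x : A) : Prop := ∃ m, f^[m] x ∈ periodicPts f

def MeetsFixedPt (f : A → A) (x : A) : Prop := ∃ u, IsFixedPt f u ∧ OrbitsMeet f x u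

theorem OrbitsMeet.eventuallyPeriodic (h : OrbitsMeet f x y) (hy : EventuallyPeriodic f y) :
    EventuallyPeriodic f x := by
  obtain ⟨m, n, h⟩ := h
  obtain ⟨k, hk⟩ := hy
  refine ⟨k + m, ?_⟩
  rw [iterate_add_apply, h, ← iterate_add_apply, add_comm, iterate_add_apply]
  exact iterate_mem_periodicPts hk n

theorem OrbitsMeet.meetsFixedPt (h : OrbitsMeet f x y) (hy : MeetsFixedPt f y) :
    MeetsFixedPt f x :=
  let ⟨u, hu, hyu⟩ := hy
  ⟨u, hu, h.trans hyu⟩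

theorem eventuallyPeriodic_of_iterate_eq (h : f^[a] x = f^[b] x) (hab : a ≠ b) :
    EventuallyPeriodic f x := by
  wlog hlt : a < b generalizing a b
  · exact this h.symm hab.symm (by omega)
  exact ⟨a, mk_mem_periodicPts (by omega) (isPeriodicPt_iterate_of_iterate_eq h hlt.le)⟩

open Classical in
/-- Taken periodic when possible, so that the base point of the component of the fixed point is
the fixed point itself. -/
noncomputable def componentBase (f : A → A) (q : Quotient (orbitsMeetSetoid f)) : A :=
  if h : ∃ z ∈ periodicPts f, Quotient.mk _ z = q then h.choose else q.out

noncomputable def base (f : A → A) (x : A) : A :=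
  componentBase f (Quotient.mk (orbitsMeetSetoid f) x)

theorem orbitsMeet_base (x : A) : OrbitsMeet f x (base f x) := by
  unfold base componentBase
  split_ifs with h
  · exact Quotient.exact h.choose_spec.2.symm
  · exact OrbitsMeet.symm (Quotient.mk_out (s := orbitsMeetSetoid f) x)

theorem base_eq_of_orbitsMeet (h : OrbitsMeet f x y) : base f x = base f y :=
  congrArg (componentBase f) (Quotient.sound h)

theorem base_apply (x : A) : base f (f x) = base f x :=
  base_eq_of_orbitsMeet (OrbitsMeet.apply_left x)

theorem base_mem_periodicPts (hx : EventuallyPeriodic f x) : base f x ∈ periodicPts f := by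
  obtain ⟨m, hm⟩ := hx
  have h : ∃ z ∈ periodicPts f, Quotient.mk (orbitsMeetSetoid f) z = Quotient.mk _ x :=
    ⟨_, hm, Quotient.sound (OrbitsMeet.iterate_left x m)⟩
  unfold base componentBase
  rw [dif_pos h]
  exact h.choose_spec.1

noncomputable def evenDist (f : A → A) (x : A) : ℕ :=
  sInf {m | ∃ k, f^[m] x = f^[2 * k] (base f x)}

/-- Off the component of the fixed point, every `m` with `f^[m] x` an even iterate of the base
point has the parity of `evenDist f x`; on it, only the least such `m`, the distance to the fixed
point, does. -/
noncomputable def side (f : A → A) (x : A) : Bool := decide (Odd (evenDist f x))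

theorem exists_iterate_evenDist (x : A) : ∃ k, f^[evenDist f x] x = f^[2 * k] (base f x) := by
  refine Nat.sInf_mem (s := {m | ∃ k, f^[m] x = f^[2 * k] (base f x)}) ?_
  obtain ⟨m, n, h⟩ := orbitsMeet_base (f := f) x
  obtain ⟨k, rfl | rfl⟩ := Nat.even_or_odd' n
  · exact ⟨m, k, h⟩
  · refine ⟨m + 1, k + 1, ?_⟩
    rw [iterate_succ_apply', h, ← iterate_succ_apply' f, Nat.mul_succ]

noncomputable def cycleDist (f : A → A) (x : A) : ℕ := sInf {m | f^[m] x ∈ periodicPts f}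

open Classical in
noncomputable def level (f : A → A) (x : A) : ℤ :=
  if EventuallyPeriodic f x then -(cycleDist f x : ℤ)
  else
    ((orbitsMeet_base (f := f) x).choose_spec.choose : ℤ) - (orbitsMeet_base (f := f) x).choose

theorem iterate_cycleDist_mem_periodicPts (hx : EventuallyPeriodic f x) :
    f^[cycleDist f x] x ∈ periodicPts f :=
  Nat.sInf_mem hx

theorem level_eq_of_not_eventuallyPeriodic (hx : ¬EventuallyPeriodic f x)
    (h : f^[m] x = f^[n] (base f x)) : level f x = n - m := by
  rw [level, if_neg hx]
  have h' := iterate_add_eq_of_eq (orbitsMeet_base (f := f) x).choose_spec.choose_spec h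
  by_contra hne
  exact hx (eventuallyPeriodic_of_iterate_eq h' (by omega))

theorem level_apply (hx : x ∉ periodicPts f) : level f (f x) = level f x + 1 := by
  by_cases hp : EventuallyPeriodic f x
  · have hfp : EventuallyPeriodic f (f x) := (OrbitsMeet.apply_left x).eventuallyPeriodic hp
    have hpos : 1 ≤ cycleDist f x := Nat.one_le_iff_ne_zero.2 fun h0 => hx <| by
      simpa [h0] using iterate_cycleDist_mem_periodicPts hp
    have hdist : cycleDist f (f x) + 1 = cycleDist f x := Nat.sInf_add hpos
    rw [level, level, if_pos hp, if_pos hfp, ← hdist]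
    push_cast
    ring
  · have hfp : ¬EventuallyPeriodic f (f x) :=
      fun h => hp ((OrbitsMeet.apply_left x).symm.eventuallyPeriodic h)
    obtain ⟨m, n, h⟩ := orbitsMeet_base (f := f) x
    have h' : f^[m] (f x) = f^[n + 1] (base f (f x)) := by
      rw [base_apply, ← iterate_succ_apply, iterate_succ_apply', h, iterate_succ_apply']
    rw [level_eq_of_not_eventuallyPeriodic hfp h', level_eq_of_not_eventuallyPeriodic hp h]
    push_cast
    ring

theorem level_of_mem_periodicPts (hx : x ∈ periodicPts f) : level f x = 0 := by
  rw [level, if_pos ⟨0, hx⟩, cycleDist, Nat.sInf_eq_zero.2 (Or.inl hx)]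
  simp

theorem level_nonpos (hx : EventuallyPeriodic f x) : level f x ≤ 0 := by
  rw [level, if_pos hx]
  omega

theorem mem_periodicPts_of_level_eq_zero (hx : EventuallyPeriodic f x) (h : level f x = 0) :
    x ∈ periodicPts f := by
  rw [level, if_pos hx] at h
  simpa [show cycleDist f x = 0 by omega] using iterate_cycleDist_mem_periodicPts hx

theorem level_apply_eq (hxy : OrbitsMeet f x y) (h : level f x = level f y) :
    level f (f x) = level f (f y) := by
  by_cases hep : EventuallyPeriodic f y
  · have hepx := hxy.eventuallyPeriodic hep
    by_cases hxp : x ∈ periodicPts f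
    · have hyp : y ∈ periodicPts f :=
        mem_periodicPts_of_level_eq_zero hep (by rw [← h, level_of_mem_periodicPts hxp])
      rw [level_of_mem_periodicPts (apply_mem_periodicPts hxp),
        level_of_mem_periodicPts (apply_mem_periodicPts hyp)]
    · have hyp : y ∉ periodicPts f := fun hyp =>
        hxp (mem_periodicPts_of_level_eq_zero hepx (by rw [h, level_of_mem_periodicPts hyp]))
      rw [level_apply hxp, level_apply hyp, h]
  · have hxp : x ∉ periodicPts f := fun hxp => hep (hxy.symm.eventuallyPeriodic ⟨0, hxp⟩)
    have hyp : y ∉ periodicPts f := fun hyp => hep ⟨0, hyp⟩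
    rw [level_apply hxp, level_apply hyp, h]

end Dynamics

section PeriodTwo

variable {A : Type*} {f : A → A} {x y z w u : A} {a b m n k : ℕ}

theorem eq_or_eq_apply_of_orbitsMeet (hz : IsPeriodicPt f 2 z) (hw : IsPeriodicPt f 2 w)
    (h : OrbitsMeet f z w) : w = z ∨ w = f z := by
  have hz' : f (f z) = z := hz
  have hw' : f (f w) = w := hw
  obtain ⟨m, n, h⟩ := h
  rcases hz.iterate_eq_or_eq_apply m with hm | hm <;>
    rcases hw.iterate_eq_or_eq_apply n with hn | hn <;> rw [hm, hn] at h
  · exact Or.inl h.symm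
  · exact Or.inr (by rw [← hw', ← h])
  · exact Or.inr h.symm
  · exact Or.inl (by rw [← hw', ← h, hz'])

variable (h2 : ∀ x ∈ periodicPts f, IsPeriodicPt f 2 x)
include h2

theorem meetsFixedPt_of_iterate_eq (h : f^[a] x = f^[b] x) (hab : a % 2 ≠ b % 2) :
    MeetsFixedPt f x := by
  wlog hlt : a < b generalizing a b
  · exact this h.symm hab.symm (by omega)
  have hper := isPeriodicPt_iterate_of_iterate_eq h hlt.le
  have hfix : IsFixedPt f (f^[a] x) := by
    have := (h2 _ (mk_mem_periodicPts (by omega) hper)).iterate_mod_apply (b - a)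
    rwa [show (b - a) % 2 = 1 by omega, hper] at this
  exact ⟨_, hfix, ⟨a, 0, rfl⟩⟩

theorem base_eq_of_isFixedPt (hu : IsFixedPt f u) (hxu : OrbitsMeet f x u) : base f x = u := by
  have hb := base_mem_periodicPts (hxu.eventuallyPeriodic ⟨0, mk_mem_periodicPts one_pos hu⟩)
  rcases eq_or_eq_apply_of_orbitsMeet (hu.isPeriodicPt 2) (h2 _ hb)
    (hxu.symm.trans (orbitsMeet_base x)) with h | h
  · exact h
  · exact h.trans hu

theorem side_eq_of_not_meetsFixedPt (hx : ¬MeetsFixedPt f x)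
    (h : f^[m] x = f^[2 * k] (base f x)) : side f x = decide (Odd m) := by
  obtain ⟨k', h'⟩ := exists_iterate_evenDist (f := f) x
  have hpar : (2 * k' + m) % 2 = (2 * k + evenDist f x) % 2 := by
    by_contra hne
    exact hx (meetsFixedPt_of_iterate_eq h2 (iterate_add_eq_of_eq h h') hne)
  simp only [side, decide_eq_decide, Nat.odd_iff]
  omega

theorem evenDist_eq_of_isFixedPt (hu : IsFixedPt f u) (hxu : OrbitsMeet f x u) :
    evenDist f x = sInf {m | f^[m] x = u} := by
  simp only [evenDist, base_eq_of_isFixedPt h2 hu hxu, (hu.iterate _).eq, exists_const]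

theorem side_apply (hx : ¬IsFixedPt f x) : side f (f x) = !side f x := by
  by_cases hfx : MeetsFixedPt f x
  · obtain ⟨u, hu, hxu⟩ := hfx
    have hne : {m | f^[m] x = u}.Nonempty :=
      let ⟨m, n, h⟩ := hxu
      ⟨m, h.trans (hu.iterate n).eq⟩
    have hpos : 1 ≤ sInf {m | f^[m] x = u} := Nat.one_le_iff_ne_zero.2 fun h0 => by
      have hxu : x = u := by simpa [h0] using Nat.sInf_mem hne
      exact hx (hxu ▸ hu)
    have hdist : sInf {m | f^[m] (f x) = u} + 1 = sInf {m | f^[m] x = u} := Nat.sInf_add hpos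
    rw [side, side, evenDist_eq_of_isFixedPt h2 hu hxu,
      evenDist_eq_of_isFixedPt h2 hu ((OrbitsMeet.apply_left x).trans hxu), ← hdist]
    simp [Nat.odd_add_one, ← Nat.not_even_iff_odd]
  · obtain ⟨k, h⟩ := exists_iterate_evenDist (f := f) x
    have h' : f^[evenDist f x + 1] (f x) = f^[2 * (k + 1)] (base f (f x)) := by
      rw [base_apply, ← iterate_succ_apply,
        show (evenDist f x + 1).succ = 2 + evenDist f x by omega, iterate_add_apply, h,
        ← iterate_add_apply, show 2 + 2 * k = 2 * (k + 1) by ring]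
    have hfx' : ¬MeetsFixedPt f (f x) :=
      fun h => hfx ((OrbitsMeet.apply_left x).symm.meetsFixedPt h)
    rw [side_eq_of_not_meetsFixedPt h2 hfx' h', side_eq_of_not_meetsFixedPt h2 hfx h]
    simp [Nat.odd_add_one, ← Nat.not_even_iff_odd]

theorem side_of_isFixedPt (hu : IsFixedPt f u) : side f u = false := by
  rw [side, evenDist_eq_of_isFixedPt h2 hu (OrbitsMeet.refl u),
    Nat.sInf_eq_zero.2 (Or.inl (show f^[0] u = u from rfl))]
  decide

theorem side_iterate (hx : ¬MeetsFixedPt f x) (n : ℕ) :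
    side f (f^[n] x) = (side f x ^^ decide (Odd n)) := by
  induction n with
  | zero => simp
  | succ n ih =>
    rw [iterate_succ_apply',
      side_apply h2 fun hfix => hx ⟨_, hfix, (OrbitsMeet.iterate_left x n).symm⟩, ih]
    simp [Nat.odd_add_one, ← Nat.not_even_iff_odd]

theorem eq_of_side_eq (hz : z ∈ periodicPts f) (hw : w ∈ periodicPts f) (h : OrbitsMeet f z w)
    (hs : side f z = side f w) : z = w := by
  rcases eq_or_eq_apply_of_orbitsMeet (h2 z hz) (h2 w hw) h with rfl | rfl
  · rfl
  · by_cases hfz : IsFixedPt f z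
    · exact hfz.symm
    · rw [side_apply h2 hfz] at hs
      simp at hs

theorem level_apply_lt_or_eq (hxy : OrbitsMeet f x y) (hy : ¬IsFixedPt f y)
    (hs : side f x = side f y) (hlt : level f x < level f y) :
    level f (f x) < level f (f y) ∨ f x = f y := by
  by_cases hep : EventuallyPeriodic f y
  · have hepx := hxy.eventuallyPeriodic hep
    have hxp : x ∉ periodicPts f := fun hxp => by
      have := level_nonpos hep
      rw [level_of_mem_periodicPts hxp] at hlt
      omega
    have hfx := level_apply hxp
    by_cases hyp : y ∈ periodicPts f
    · rw [level_of_mem_periodicPts (apply_mem_periodicPts hyp)]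
      have hepfx := (OrbitsMeet.apply_left x).eventuallyPeriodic hepx
      rcases (level_nonpos hepfx).lt_or_eq with h | h
      · exact Or.inl h
      refine Or.inr (eq_of_side_eq h2 (mem_periodicPts_of_level_eq_zero hepfx h)
        (apply_mem_periodicPts hyp)
        ((OrbitsMeet.apply_left x).trans (hxy.trans (OrbitsMeet.apply_left y).symm)) ?_)
      rw [side_apply h2 (fun h => hxp (mk_mem_periodicPts one_pos h)), side_apply h2 hy, hs]
    · rw [level_apply hyp]
      omega
  · have hxp : x ∉ periodicPts f := fun hxp => hep (hxy.symm.eventuallyPeriodic ⟨0, hxp⟩)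
    have hyp : y ∉ periodicPts f := fun hyp => hep ⟨0, hyp⟩
    rw [level_apply hxp, level_apply hyp]
    omega

theorem exists_iterate_eq_of_level_eq (hxy : OrbitsMeet f x y) (hs : side f x = side f y)
    (hl : level f x = level f y) : ∃ N, f^[N] x = f^[N] y := by
  by_cases hfx : MeetsFixedPt f x
  · obtain ⟨u, hu, a, b, ha⟩ := hfx
    obtain ⟨c, d, hc⟩ := hxy.symm.trans ⟨a, b, ha⟩
    refine ⟨c + a, ?_⟩
    rw [iterate_add_apply, ha.trans (hu.iterate b).eq, (hu.iterate c).eq, add_comm,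
      iterate_add_apply, hc.trans (hu.iterate d).eq, (hu.iterate a).eq]
  by_cases hep : EventuallyPeriodic f x
  · have hepy := hxy.symm.eventuallyPeriodic hep
    have hd : cycleDist f x = cycleDist f y := by
      rw [level, level, if_pos hep, if_pos hepy] at hl
      omega
    have hy : f^[cycleDist f x] y ∈ periodicPts f := by
      rw [hd]
      exact iterate_cycleDist_mem_periodicPts hepy
    refine ⟨cycleDist f x, eq_of_side_eq h2 (iterate_cycleDist_mem_periodicPts hep) hy
      ((OrbitsMeet.iterate_left x _).trans (hxy.trans (OrbitsMeet.iterate_left y _).symm)) ?_⟩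
    rw [side_iterate h2 hfx, side_iterate h2 (fun h => hfx (hxy.meetsFixedPt h)), hs]
  · obtain ⟨m, n, h⟩ := orbitsMeet_base (f := f) x
    obtain ⟨a, b, h'⟩ := orbitsMeet_base (f := f) y
    have hepy : ¬EventuallyPeriodic f y := fun h => hep (hxy.eventuallyPeriodic h)
    rw [level_eq_of_not_eventuallyPeriodic hep h,
      level_eq_of_not_eventuallyPeriodic hepy h'] at hl
    rw [← base_eq_of_orbitsMeet hxy] at h'
    exact ⟨b + m, by rw [iterate_add_eq_of_eq h h', show n + a = b + m by omega]⟩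

end PeriodTwo

section Key

variable {A L : Type*} {f : A → A} {e : A → L} {x y u : A}

open Classical in
noncomputable def componentKey (e : A → L) (f : A → A) (x : A) : WithTop L :=
  if MeetsFixedPt f x then ⊤ else e (base f x)

noncomputable def key (e : A → L) (f : A → A) (x : A) :
    WithTop L ×ₗ ℤ ×ₗ Colex (ℕ → L) :=
  toLex (componentKey e f x, toLex (level f x, toColex fun n => e (f^[n] x)))

open Classical in
theorem componentKey_apply (x : A) : componentKey e f (f x) = componentKey e f x := by
  have h : MeetsFixedPt f (f x) ↔ MeetsFixedPt f x :=
    ⟨(OrbitsMeet.apply_left x).symm.meetsFixedPt, (OrbitsMeet.apply_left x).meetsFixedPt⟩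
  rw [componentKey, componentKey, base_apply]
  exact if_congr h rfl rfl

theorem componentKey_of_isFixedPt (hu : IsFixedPt f u) : componentKey e f u = ⊤ :=
  if_pos ⟨u, hu, .refl u⟩

theorem orbitsMeet_of_componentKey_eq (hfix : ∀ u v, IsFixedPt f u → IsFixedPt f v → u = v)
    (he : Injective e) (h : componentKey e f x = componentKey e f y) : OrbitsMeet f x y := by
  unfold componentKey at h
  split_ifs at h with hx hy hy
  · obtain ⟨u, hu, hxu⟩ := hx
    obtain ⟨v, hv, hyv⟩ := hy
    rw [hfix u v hu hv] at hxu
    exact hxu.trans hyv.symm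
  · exact absurd h WithTop.top_ne_coe
  · exact absurd h WithTop.coe_ne_top
  · exact (orbitsMeet_base x).trans (he (WithTop.coe_injective h) ▸ (orbitsMeet_base y).symm)

theorem key_injective (he : Injective e) : Injective (key e f) := by
  intro x y h
  simp only [key, toLex_inj, Prod.mk.injEq, toColex_inj] at h
  exact he (congrFun h.2.2 0)

variable [LinearOrder L] (h2 : ∀ x ∈ periodicPts f, IsPeriodicPt f 2 x)
  (hfix : ∀ u v, IsFixedPt f u → IsFixedPt f v → u = v) (he : Injective e)
include h2 hfix he

theorem key_le_total (hs : side f x = side f y) :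
    key e f x ≤ key e f y ∨ key e f y ≤ key e f x := by
  simp only [key, Prod.Lex.toLex_le_toLex]
  rcases lt_trichotomy (componentKey e f x) (componentKey e f y) with hc | hc | hc
  · exact Or.inl (Or.inl hc)
  · have hxy := orbitsMeet_of_componentKey_eq hfix he hc
    rcases lt_trichotomy (level f x) (level f y) with hl | hl | hl
    · exact Or.inl (Or.inr ⟨hc, Or.inl hl⟩)
    · obtain ⟨N, hN⟩ := exists_iterate_eq_of_level_eq h2 hxy hs hl
      have hcol := toColex_le_total_of_eventually_eq (a := fun n => e (f^[n] x))
        (b := fun n => e (f^[n] y)) (N := N) fun n hn => by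
          rw [show n = (n - N) + N by omega, iterate_add_apply, iterate_add_apply, hN]
      rcases hcol with hcol | hcol
      · exact Or.inl (Or.inr ⟨hc, Or.inr ⟨hl, hcol⟩⟩)
      · exact Or.inr (Or.inr ⟨hc.symm, Or.inr ⟨hl.symm, hcol⟩⟩)
    · exact Or.inr (Or.inr ⟨hc.symm, Or.inl hl⟩)
  · exact Or.inr (Or.inl hc)

theorem key_apply_le (hy : ¬IsFixedPt f y) (hs : side f x = side f y)
    (h : key e f x ≤ key e f y) : key e f (f x) ≤ key e f (f y) := by
  simp only [key, Prod.Lex.toLex_le_toLex, componentKey_apply] at h ⊢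
  rcases h with hc | ⟨hc, hl | ⟨hl, hcol⟩⟩
  · exact Or.inl hc
  · rcases level_apply_lt_or_eq h2 (orbitsMeet_of_componentKey_eq hfix he hc) hy hs hl with
      hl' | heq
    · exact Or.inr ⟨hc, Or.inl hl'⟩
    · exact Or.inr ⟨hc, Or.inr ⟨by rw [heq], by rw [heq]⟩⟩
  · exact Or.inr ⟨hc, Or.inr ⟨level_apply_eq (orbitsMeet_of_componentKey_eq hfix he hc) hl,
      toColex_tail_le_tail hcol⟩⟩

theorem key_le_of_isFixedPt (hu : IsFixedPt f u) (y : A) : key e f y ≤ key e f u := by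
  rcases eq_or_ne y u with rfl | hne
  · exact le_rfl
  have hu' : u ∈ periodicPts f := mk_mem_periodicPts one_pos hu
  simp only [key, Prod.Lex.toLex_le_toLex, componentKey_of_isFixedPt hu,
    level_of_mem_periodicPts hu']
  rcases (le_top : componentKey e f y ≤ ⊤).lt_or_eq with hc | hc
  · exact Or.inl hc
  have hyu := orbitsMeet_of_componentKey_eq hfix he (hc.trans (componentKey_of_isFixedPt hu).symm)
  have hep : EventuallyPeriodic f y := hyu.eventuallyPeriodic ⟨0, hu'⟩
  rcases (level_nonpos hep).lt_or_eq with hl | hl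
  · exact Or.inr ⟨hc, Or.inl hl⟩
  rcases eq_or_eq_apply_of_orbitsMeet (hu.isPeriodicPt 2)
    (h2 y (mem_periodicPts_of_level_eq_zero hep hl)) hyu.symm with h | h
  · exact absurd h hne
  · exact absurd (h.trans hu) hne

end Key

/-- **Theorem 3.7.** If `f²` has no proper cycle and `f` has at
most one fixed point, then there is a distributive lattice structure on `A`
making `f` a lattice anti-endomorphism. -/
theorem exists_distribLattice_antiEndo {A : Type*} (f : A → A)
    (hcyc : ∀ n : ℕ, 2 ≤ n → ¬ HasCycle (f ∘ f) n)
    (hfix : ∀ u v : A, f u = u → f v = v → u = v) :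
    ∃ inst : DistribLattice A,
      @IsLatAntiEndo A (@DistribLattice.toLattice A inst) f := by
  have h2 : ∀ x ∈ periodicPts f, IsPeriodicPt f 2 x :=
    fun _ => isPeriodicPt_two_of_forall_not_hasCycle hcyc
  have he := (embeddingToCardinal : A ↪ Cardinal).injective
  obtain ⟨_, hanti⟩ := exists_linearOrder_antitone_of_side (s := side f)
    (key_injective (f := f) he) (fun _ _ => key_le_total h2 hfix he) (fun _ => side_apply h2)
    (fun _ hu => ⟨side_of_isFixedPt h2 hu, fun y _ => key_le_of_isFixedPt h2 hfix he hu y⟩)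
    (fun _ _ _ hy => key_apply_le h2 hfix he hy)
  exact ⟨inferInstance, fun x y => ⟨hanti.map_max, hanti.map_min⟩⟩
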